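/- For every n ≥ 1 there exists a 3-graph G on 2n vertices such that G contains no copy of K5^{(3)} and δ1(G) = C(2n−1, 2) − C(n−1, 2). Consequently c1(K5^{(3)}) ≥ 3/4. (Such a G is obtained by partitioning the vertex set into two n-sets V1, V2 and taking as edges all triples meeting both V1 and V2.) -/

import Mathlib

open Finset


/-- The degree of a vertex in a hypergraph: the number of edges containing it. -/
def hdeg {V : Type*} [DecidableEq V] (G : Finset (Finset V)) (x : V) : ℕ :=
  (G.filter (fun e => x ∈ e)).card

/-- The minimum vertex degree of a hypergraph. -/
noncomputable def minDeg {V : Type*} [DecidableEq V] (G : Finset (Finset V)) : ℕ :=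
  sInf (Set.range (hdeg G))

/-- Vertex `x` is covered by a copy of the complete 3-graph `K_t⁽³⁾` in `H`. -/
def CovK {V : Type*} [DecidableEq V] (t : ℕ) (H : Finset (Finset V)) (x : V) : Prop :=
  ∃ S : Finset V, x ∈ S ∧ S.card = t ∧ ∀ e ⊆ S, e.card = 3 → e ∈ H

/-- `c₁(n, K_t⁽³⁾)`: the maximum of `δ₁(G)` over `n`-vertex 3-graphs `G` having
no `K_t⁽³⁾`-covering. -/
noncomputable def c1K (t n : ℕ) : ℕ :=
  sSup {d : ℕ | ∃ H : Finset (Finset (Fin n)),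
    (∀ e ∈ H, e.card = 3) ∧ (∃ x, ¬ CovK t H x) ∧ d = minDeg H}

/-- `c₁(K_t⁽³⁾) = limsup_{n → ∞} c₁(n, K_t⁽³⁾)/C(n−1, 2)`. -/
noncomputable def c1Kdens (t : ℕ) : ℝ :=
  Filter.limsup (fun n : ℕ => (c1K t n : ℝ) / ((n - 1).choose 2 : ℝ)) Filter.atTop

/-!
Split the `2n` vertices into two halves and take every triple meeting both. Among any five
vertices three lie in the same half and span a non-edge, so there is no `K₅⁽³⁾`, while a vertex
lies in all `C(2n-1, 2)` triples through it except the `C(n-1, 2)` inside its own half. As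
`4 C(n-1, 2) ≤ C(2n-1, 2)`, this gives `c₁(2n, K₅⁽³⁾) / C(2n-1, 2) ≥ 3/4` for every `n ≥ 1`; the
ratios `c₁(m, K₅⁽³⁾) / C(m-1, 2)` are bounded by `1` because no vertex lies in more than
`C(m-1, 2)` triples.
-/

lemma card_filter_mem_powersetCard_succ {α : Type*} [DecidableEq α] {T : Finset α} {x : α}
    (hx : x ∈ T) (k : ℕ) :
    #{e ∈ T.powersetCard (k + 1) | x ∈ e} = (#T - 1).choose k := by
  rw [← card_erase_of_mem hx, ← card_powersetCard]
  refine card_nbij' (·.erase x) (insert x) ?_ ?_ ?_ ?_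
  · intro e he
    simp only [mem_coe, mem_filter, mem_powersetCard] at he ⊢
    exact ⟨erase_subset_erase x he.1.1, by rw [card_erase_of_mem he.2, he.1.2]; rfl⟩
  · intro f hf
    simp only [mem_coe, mem_filter, mem_powersetCard, mem_insert_self, and_true] at hf ⊢
    have hxf : x ∉ f := fun h => (mem_erase.1 (hf.1 h)).1 rfl
    exact ⟨insert_subset hx (hf.1.trans (erase_subset x T)),
      by rw [card_insert_of_notMem hxf, hf.2]⟩
  · intro e he
    exact insert_erase (mem_filter.1 he).2
  · intro f hf
    exact erase_insert fun h => (mem_erase.1 ((mem_powersetCard.1 hf).1 h)).1 rfl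

section Hypergraph

variable {V : Type*} [DecidableEq V]

lemma hdeg_le_choose [Fintype V] {H : Finset (Finset V)} (hH : ∀ e ∈ H, #e = 3) (x : V) :
    hdeg H x ≤ (Fintype.card V - 1).choose 2 := by
  calc hdeg H x ≤ #{e ∈ (univ : Finset V).powersetCard 3 | x ∈ e} :=
        card_le_card fun e he => by
          rw [mem_filter] at he ⊢
          exact ⟨mem_powersetCard.2 ⟨subset_univ e, hH e he.1⟩, he.2⟩
    _ = (Fintype.card V - 1).choose 2 := card_filter_mem_powersetCard_succ (mem_univ x) 2

lemma minDeg_le_hdeg (H : Finset (Finset V)) (x : V) : minDeg H ≤ hdeg H x :=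
  Nat.sInf_le (Set.mem_range_self x)

lemma minDeg_eq_of_forall_hdeg_eq [Nonempty V] {H : Finset (Finset V)} {d : ℕ}
    (h : ∀ x, hdeg H x = d) : minDeg H = d := by
  rw [minDeg, show hdeg H = fun _ => d from funext h, Set.range_const, csInf_singleton]

variable [Fintype V]

def crossingTriples (A : Finset V) : Finset (Finset V) :=
  {e ∈ univ.powersetCard 3 | ¬ e ⊆ A ∧ ¬ e ⊆ Aᶜ}

lemma mem_crossingTriples {A e : Finset V} :
    e ∈ crossingTriples A ↔ #e = 3 ∧ ¬ e ⊆ A ∧ ¬ e ⊆ Aᶜ := by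
  simp [crossingTriples]

lemma card_of_mem_crossingTriples {A e : Finset V} (he : e ∈ crossingTriples A) : #e = 3 :=
  (mem_crossingTriples.1 he).1

lemma crossingTriples_compl (A : Finset V) : crossingTriples Aᶜ = crossingTriples A := by
  ext e
  simp only [mem_crossingTriples, compl_compl]
  tauto

lemma crossingTriples_not_clique (A : Finset V) {S : Finset V} (hS : 5 ≤ #S) :
    ¬ ∀ e ⊆ S, #e = 3 → e ∈ crossingTriples A := by
  intro hclique
  have hsplit := card_inter_add_card_sdiff S A
  by_cases hin : 3 ≤ #(S ∩ A)
  · obtain ⟨e, heS, he⟩ := exists_subset_card_eq hin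
    exact (mem_crossingTriples.1 (hclique e (heS.trans inter_subset_left) he)).2.1
      (heS.trans inter_subset_right)
  · obtain ⟨e, heS, he⟩ := exists_subset_card_eq (show 3 ≤ #(S \ A) by omega)
    exact (mem_crossingTriples.1 (hclique e (heS.trans sdiff_subset) he)).2.2
      fun y hy => mem_compl.2 (mem_sdiff.1 (heS hy)).2

lemma hdeg_crossingTriples_of_mem {A : Finset V} {x : V} (hx : x ∈ A) :
    hdeg (crossingTriples A) x = (Fintype.card V - 1).choose 2 - (#A - 1).choose 2 := by
  set through : Finset (Finset V) := {e ∈ univ.powersetCard 3 | x ∈ e}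
  have hcross : {e ∈ crossingTriples A | x ∈ e} = {e ∈ through | ¬ e ⊆ A} := by
    ext e
    simp only [through, mem_filter, mem_crossingTriples, mem_powersetCard, subset_univ, true_and]
    exact ⟨fun h => ⟨⟨h.1.1, h.2⟩, h.1.2.1⟩,
      fun h => ⟨⟨h.1.1, h.2, fun hc => mem_compl.1 (hc h.1.2) hx⟩, h.1.2⟩⟩
  have hinside : {e ∈ through | e ⊆ A} = {e ∈ A.powersetCard 3 | x ∈ e} := by
    ext e
    simp only [through, mem_filter, mem_powersetCard, subset_univ, true_and]
    tauto
  rw [hdeg, hcross, filter_not, card_sdiff_of_subset (filter_subset _ _), hinside,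
    card_filter_mem_powersetCard_succ hx, card_filter_mem_powersetCard_succ (mem_univ x),
    card_univ]

lemma hdeg_crossingTriples_of_card_eq {A : Finset V} {k : ℕ} (hA : #A = k) (hAc : #Aᶜ = k)
    (x : V) : hdeg (crossingTriples A) x = (Fintype.card V - 1).choose 2 - (k - 1).choose 2 := by
  by_cases hx : x ∈ A
  · rw [hdeg_crossingTriples_of_mem hx, hA]
  · rw [← crossingTriples_compl, hdeg_crossingTriples_of_mem (mem_compl.2 hx), hAc]

end Hypergraph

lemma choose_mem_upperBounds_c1K (t n : ℕ) :
    (n - 1).choose 2 ∈ upperBounds {d : ℕ | ∃ H : Finset (Finset (Fin n)),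
      (∀ e ∈ H, e.card = 3) ∧ (∃ x, ¬ CovK t H x) ∧ d = minDeg H} := by
  rintro _ ⟨H, hH, ⟨x, -⟩, rfl⟩
  simpa using (minDeg_le_hdeg H x).trans (hdeg_le_choose hH x)

lemma c1K_le_choose (t n : ℕ) : c1K t n ≤ (n - 1).choose 2 :=
  csSup_le' (choose_mem_upperBounds_c1K t n)

lemma minDeg_le_c1K {t n : ℕ} {H : Finset (Finset (Fin n))} (hH : ∀ e ∈ H, #e = 3) {x : Fin n}
    (hx : ¬ CovK t H x) : minDeg H ≤ c1K t n :=
  le_csSup ⟨_, choose_mem_upperBounds_c1K t n⟩ ⟨H, hH, ⟨x, hx⟩, rfl⟩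

lemma hdeg_crossingTriples_halves (n : ℕ) (x : Fin (2 * n)) :
    hdeg (crossingTriples {i : Fin (2 * n) | i < n}) x
      = (2 * n - 1).choose 2 - (n - 1).choose 2 := by
  have hA : #({i | i < n} : Finset (Fin (2 * n))) = n := by rw [Fin.card_filter_val_lt]; omega
  have hAc : #({i | i < n} : Finset (Fin (2 * n)))ᶜ = n := by
    rw [card_compl, hA, Fintype.card_fin]; omega
  rw [hdeg_crossingTriples_of_card_eq hA hAc, Fintype.card_fin]

lemma minDeg_crossingTriples_halves {n : ℕ} (hn : 1 ≤ n) :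
    minDeg (crossingTriples {i : Fin (2 * n) | i < n})
      = (2 * n - 1).choose 2 - (n - 1).choose 2 :=
  have : Nonempty (Fin (2 * n)) := ⟨⟨0, by omega⟩⟩
  minDeg_eq_of_forall_hdeg_eq (hdeg_crossingTriples_halves n)

lemma four_mul_choose_two_le (n : ℕ) : 4 * (n - 1).choose 2 ≤ (2 * n - 1).choose 2 := by
  rcases n with _ | a
  · simp
  rw [show 2 * (a + 1) - 1 = 2 * a + 1 by omega, Nat.add_sub_cancel]
  have key : (4 : ℝ) * (a.choose 2 : ℝ) ≤ ((2 * a + 1).choose 2 : ℝ) := by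
    rw [Nat.cast_choose_two, Nat.cast_choose_two]
    push_cast
    ring_nf
    linarith [a.cast_nonneg (α := ℝ)]
  exact_mod_cast key

lemma three_mul_choose_le_four_mul_c1K {n : ℕ} (hn : 1 ≤ n) :
    3 * (2 * n - 1).choose 2 ≤ 4 * c1K 5 (2 * n) := by
  have hlower := minDeg_le_c1K (t := 5) (x := ⟨0, by omega⟩)
    (fun e => card_of_mem_crossingTriples (A := {i : Fin (2 * n) | i < n}))
    (fun ⟨S, _, hS, hclique⟩ => crossingTriples_not_clique _ hS.ge hclique)
  rw [minDeg_crossingTriples_halves hn] at hlower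
  have := four_mul_choose_two_le n
  omega

lemma three_quarters_le_c1Kdens_five : (3 / 4 : ℝ) ≤ c1Kdens 5 := by
  refine Filter.le_limsup_of_frequently_le
    (Filter.frequently_atTop.2 fun N => ⟨2 * (N + 2), by omega, ?_⟩)
    (Filter.isBoundedUnder_of ⟨1, fun n =>
      div_le_one_of_le₀ (by exact_mod_cast c1K_le_choose 5 n) (by positivity)⟩)
  have hpos : (0 : ℝ) < ((2 * (N + 2) - 1).choose 2 : ℕ) :=
    Nat.cast_pos.2 (Nat.choose_pos (show 2 ≤ 2 * (N + 2) - 1 by omega))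
  have hratio :
      (3 : ℝ) * ((2 * (N + 2) - 1).choose 2 : ℕ) ≤ 4 * (c1K 5 (2 * (N + 2)) : ℝ) := by
    exact_mod_cast three_mul_choose_le_four_mul_c1K (by omega)
  rw [le_div_iff₀ hpos]
  linarith

theorem stmt13 :
    (∀ n : ℕ, 1 ≤ n →
      ∃ G : Finset (Finset (Fin (2 * n))),
        (∀ e ∈ G, e.card = 3) ∧
        (¬ ∃ S : Finset (Fin (2 * n)), S.card = 5 ∧ ∀ e ⊆ S, e.card = 3 → e ∈ G) ∧
        minDeg G = (2 * n - 1).choose 2 - (n - 1).choose 2) ∧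
    (3 / 4 : ℝ) ≤ c1Kdens 5 := by
  exact ⟨fun n hn => ⟨crossingTriples {i | i < n}, fun e => card_of_mem_crossingTriples,
    fun ⟨S, hS, hclique⟩ => crossingTriples_not_clique _ hS.ge hclique,
    minDeg_crossingTriples_halves hn⟩, three_quarters_le_c1Kdens_five⟩
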